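/- Let C be an [n, k] MDS code over 𝔽 = GF(q^ℓ) and let 𝔹 = GF(q). Suppose nodes C₁, ..., C_e are erased (e ≤ n - k) and there exist eℓ dual codewords (C'_{ij1}, ..., C'_{ijn}), i ∈ [e], j ∈ [ℓ], such that the truncated vectors V_{ij} = (C'_{ij1}, ..., C'_{ije}) ∈ 𝔽^e are linearly independent over 𝔹. Then the values C₁, ..., C_e are uniquely determined by the collection of traces {tr_{𝔽/𝔹}(C'_{ijt} C_t) : e+1 ≤ t ≤ n, i ∈ [e], j ∈ [ℓ]} together with the dual codewords. -/

import Mathlib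

/-!
Put `x = c - d ∈ C`. For every dual codeword `D`, `D ⬝ᵥ x = 0` splits into the erased
part `∑_{v < e} D v * x v` and the rest, whose traces all vanish by hypothesis; hence the
`B`-linear functional `w ↦ tr (w ⬝ᵥ (x v)_{v<e})` on `F^e` kills every truncation `V_{ij}`.
Since `F` has degree `ℓ` over `B`, the `eℓ` independent truncations span `F^e` over `B`, so
the functional is zero, and nondegeneracy of the trace form forces `x v = 0` for `v < e`.
-/

open Module Submodule Matrix

theorem Module.finrank_eq_of_card_eq_pow {K V : Type*} [Field K] [AddCommGroup V]
    [Module K V] [Fintype K] [Fintype V] {q ℓ : ℕ} (hK : Fintype.card K = q)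
    (hV : Fintype.card V = q ^ ℓ) : finrank K V = ℓ := by
  subst hK
  exact Nat.pow_right_injective (Fintype.one_lt_card (α := K)) (card_eq_pow_finrank.symm.trans hV)

theorem eq_zero_of_forall_trace_dotProduct_eq_zero {B F σ : Type*} [Field B] [Field F]
    [Algebra B F] [FiniteDimensional B F] [Algebra.IsSeparable B F] [Fintype σ] {y : σ → F}
    (h : ∀ w : σ → F, Algebra.trace B F (w ⬝ᵥ y) = 0) : y = 0 := by
  classical
  funext v
  refine (traceForm_nondegenerate B F).1 (y v) fun z => ?_
  simpa [Algebra.traceForm_apply, mul_comm] using h (Pi.single v z)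

theorem eq_zero_of_trace_dotProduct_eq_zero_of_span_eq_top {B F σ ι : Type*} [Field B] [Field F]
    [Algebra B F] [FiniteDimensional B F] [Algebra.IsSeparable B F] [Fintype σ]
    {W : ι → σ → F} (hW : span B (Set.range W) = ⊤) {y : σ → F}
    (h : ∀ i, Algebra.trace B F (W i ⬝ᵥ y) = 0) : y = 0 := by
  let L : (σ → F) →ₗ[B] B :=
    Algebra.trace B F ∘ₗ ((dotProductBilin F F).flip y).restrictScalars B
  have hL : L = 0 := LinearMap.ext_on_range hW (by simpa [L] using h)
  exact eq_zero_of_forall_trace_dotProduct_eq_zero fun w => LinearMap.congr_fun hL w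

theorem trace_dotProduct_castAdd_eq_zero {B F : Type*} [CommRing B] [CommRing F] [Algebra B F]
    {e m : ℕ} {D x : Fin (e + m) → F} (hdual : D ⬝ᵥ x = 0)
    (hknown : ∀ t : Fin m, Algebra.trace B F (D (Fin.natAdd e t) * x (Fin.natAdd e t)) = 0) :
    Algebra.trace B F ((fun v => D (Fin.castAdd m v)) ⬝ᵥ fun v => x (Fin.castAdd m v)) = 0 := by
  rw [dotProduct, Fin.sum_univ_add] at hdual
  rw [dotProduct, eq_neg_of_add_eq_zero_left hdual, map_neg, map_sum,
    Finset.sum_eq_zero fun t _ => hknown t, neg_zero]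

theorem stmt17_general (q ℓ n e : ℕ) (hen : e ≤ n)
    (B F : Type*) [Field B] [Field F] [Algebra B F] [Fintype B] [Fintype F]
    (hB : Fintype.card B = q) (hF : Fintype.card F = q ^ ℓ)
    (C : Submodule F (Fin n → F))
    (D : Fin e × Fin ℓ → Fin n → F)
    (hdual : ∀ ij : Fin e × Fin ℓ, ∀ c ∈ C, (∑ t, D ij t * c t) = 0)
    (hV : LinearIndependent B fun ij : Fin e × Fin ℓ =>
      fun v : Fin e => D ij (Fin.castLE hen v))
    (c d : Fin n → F) (hc : c ∈ C) (hd : d ∈ C)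
    (htr : ∀ (ij : Fin e × Fin ℓ) (t : Fin n), e ≤ (t : ℕ) →
      Algebra.trace B F (D ij t * c t) = Algebra.trace B F (D ij t * d t)) :
    ∀ v : Fin n, (v : ℕ) < e → c v = d v := by
  obtain ⟨m, rfl⟩ := Nat.exists_eq_add_of_le hen
  have hspan := hV.span_eq_top_of_card_eq_finrank'
    (by simp [finrank_pi_fintype, finrank_eq_of_card_eq_pow hB hF, mul_comm])
  have hy := eq_zero_of_trace_dotProduct_eq_zero_of_span_eq_top hspan
    (y := fun v => c (Fin.castAdd m v) - d (Fin.castAdd m v)) fun ij =>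
      trace_dotProduct_castAdd_eq_zero (hdual ij _ (sub_mem hc hd)) fun t => by
        rw [Pi.sub_apply, mul_sub, map_sub, htr ij _ (by simp), sub_self]
  intro v hv
  exact sub_eq_zero.1 (congrFun hy ⟨v, hv⟩)

/-- for an `[n,k]` MDS code over `𝔽 = GF(q^ℓ)` with `e ≤ n - k`
erased coordinates and `eℓ` dual codewords whose truncations to the erased
coordinates are linearly independent over `𝔹 = GF(q)`, the erased values are
uniquely determined by the traces `tr(C'_{ijt} C_t)`, `t > e`. -/
theorem stmt17 (q ℓ n k e : ℕ) (he : e ≤ n - k) (hen : e ≤ n)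
    (B F : Type*) [Field B] [Field F] [Algebra B F] [Fintype B] [Fintype F]
    [DecidableEq F]
    (hB : Fintype.card B = q) (hF : Fintype.card F = q ^ ℓ)
    (C : Submodule F (Fin n → F)) (hk : Module.finrank F C = k)
    (hMDS : ∀ x ∈ C, x ≠ 0 →
      n - k + 1 ≤ (Finset.univ.filter fun t : Fin n => x t ≠ 0).card)
    (D : Fin e × Fin ℓ → Fin n → F)
    (hdual : ∀ ij : Fin e × Fin ℓ, ∀ c ∈ C, (∑ t, D ij t * c t) = 0)
    (hV : LinearIndependent B fun ij : Fin e × Fin ℓ =>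
      fun v : Fin e => D ij (Fin.castLE hen v))
    (c d : Fin n → F) (hc : c ∈ C) (hd : d ∈ C)
    (htr : ∀ (ij : Fin e × Fin ℓ) (t : Fin n), e ≤ (t : ℕ) →
      Algebra.trace B F (D ij t * c t) = Algebra.trace B F (D ij t * d t)) :
    ∀ v : Fin n, (v : ℕ) < e → c v = d v :=
  stmt17_general q ℓ n e hen B F hB hF C D hdual hV c d hc hd htr
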